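/- arXiv:2112.07167 — 3 statements merged into one kernel-verified Lean document; each statement's English description precedes it below -/
import Mathlib

section
/- If {a_n} is a strictly moderate sequence and p(n) is any polynomial in n with positive values, then p(n)·exp(-n·a_n²) = exp(-n·b_n²) for some moderate sequence {b_n}, and for any η > 0 there exists N such that b_n ≤ a_n + η·a_n for all n ≥ N. -/
/-
Write p(n) = exp L_n with L_n = log p(n) and put b_n = √(a_n² − L_n / n), so that
n·b_n² = n·a_n² − L_n whenever the right side is nonnegative. Since L_n ≤ (deg p + 1)·log n
eventually, strict moderateness forces n·a_n² − L_n → ∞, which gives the identity and n·b_n² → ∞.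
Since L_n is bounded below, b_n² ≤ a_n² + O(1/n), and O(1/n) ≤ ((1 + η)² − 1)·a_n² eventually
because n·a_n² → ∞; this gives b_n ≤ (1 + η)·a_n, and with η = 1 also b_n → 0.
-/

open Filter

/-- A moderate sequence: nonnegative, a_n → 0, and n·a_n² → ∞. -/
def Moderate (a : ℕ → ℝ) : Prop :=
  (∀ n, 0 ≤ a n) ∧ Filter.Tendsto a Filter.atTop (nhds 0) ∧
    Filter.Tendsto (fun n : ℕ => (n : ℝ) * (a n) ^ 2) Filter.atTop Filter.atTop

/-- A strictly moderate sequence additionally satisfies n·a_n²/log n → ∞. -/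
def StrictlyModerate (a : ℕ → ℝ) : Prop :=
  Moderate a ∧
    Filter.Tendsto (fun n : ℕ => (n : ℝ) * (a n) ^ 2 / Real.log n) Filter.atTop Filter.atTop

open Real Polynomial Topology

namespace Polynomial

theorem eventually_log_eval_le (p : ℝ[X]) :
    ∀ᶠ x : ℝ in atTop, log (p.eval x) ≤ (p.natDegree + 1) * log x := by
  have hdeg : p.degree < (X ^ (p.natDegree + 1) : ℝ[X]).degree := by
    rw [degree_X_pow]
    exact (degree_le_natDegree).trans_lt (by exact_mod_cast Nat.lt_succ_self _)
  filter_upwards [(isLittleO_atTop_of_degree_lt _ _ hdeg).bound one_pos, eventually_ge_atTop 1]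
    with x hbound hx
  rw [← log_abs, ← Nat.cast_succ, ← log_pow]
  rcases eq_or_ne (p.eval x) 0 with h0 | h0
  · rw [h0, abs_zero, log_zero]
    exact log_nonneg (one_le_pow₀ hx)
  · refine log_le_log (abs_pos.mpr h0) ?_
    simpa [abs_of_nonneg (zero_le_one.trans hx)] using hbound

theorem exists_eventually_le_log_eval (p : ℝ[X]) :
    ∃ c, ∀ᶠ x : ℝ in atTop, c ≤ log (p.eval x) := by
  rcases le_or_gt p.degree 0 with hdeg | hdeg
  · refine ⟨log (p.coeff 0), Eventually.of_forall fun x => ?_⟩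
    rw [eq_C_of_degree_le_zero hdeg, eval_C, coeff_C_zero]
  · refine ⟨0, ?_⟩
    filter_upwards [(abs_tendsto_atTop p hdeg).eventually_ge_atTop 1] with x hx
    rw [← log_abs]
    exact log_nonneg hx

end Polynomial

/-- `Real.sqrt` sends the negative values of `a n ^ 2 - L n / n` to `0`. -/
noncomputable def shiftedSeq (a L : ℕ → ℝ) (n : ℕ) : ℝ := √(a n ^ 2 - L n / n)

section shiftedSeq

variable {a L : ℕ → ℝ}

theorem eventually_shiftedSeq_le (ha : Moderate a) {c : ℝ} (hL : ∀ᶠ n in atTop, c ≤ L n)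
    {η : ℝ} (hη : 0 < η) : ∀ᶠ n in atTop, shiftedSeq a L n ≤ (1 + η) * a n := by
  obtain ⟨ha_nonneg, -, ha_top⟩ := ha
  have hκ : 0 < 2 * η + η ^ 2 := by positivity
  filter_upwards [hL, (ha_top.const_mul_atTop hκ).eventually_ge_atTop (-c),
    eventually_gt_atTop 0] with n hLn hn hn0
  have hn0 : (0 : ℝ) < n := by exact_mod_cast hn0
  rw [shiftedSeq, ← sqrt_sq (mul_nonneg (by linarith) (ha_nonneg n))]
  refine sqrt_le_sqrt ?_
  rw [sub_le_iff_le_add, ← sub_le_iff_le_add', le_div_iff₀ hn0]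
  linarith [show (a n ^ 2 - ((1 + η) * a n) ^ 2) * n = -((2 * η + η ^ 2) * (n * a n ^ 2)) by ring]

theorem tendsto_shiftedSeq_zero (ha : Moderate a) {c : ℝ} (hL : ∀ᶠ n in atTop, c ≤ L n) :
    Tendsto (shiftedSeq a L) atTop (𝓝 0) := by
  have h2a : Tendsto (fun n => (1 + 1) * a n) atTop (𝓝 0) := by
    simpa using ha.2.1.const_mul (1 + 1)
  exact tendsto_of_tendsto_of_tendsto_of_le_of_le' tendsto_const_nhds h2a
    (Eventually.of_forall fun n => sqrt_nonneg _) (eventually_shiftedSeq_le ha hL one_pos)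

theorem eventually_natCast_mul_shiftedSeq_sq (hL : ∀ᶠ n in atTop, 0 ≤ n * a n ^ 2 - L n) :
    ∀ᶠ n : ℕ in atTop, n * shiftedSeq a L n ^ 2 = n * a n ^ 2 - L n := by
  filter_upwards [hL, eventually_gt_atTop 0] with n hLn hn0
  have hn0 : (0 : ℝ) < n := by exact_mod_cast hn0
  have hrw : a n ^ 2 - L n / n = (n * a n ^ 2 - L n) / n := by field_simp
  rw [shiftedSeq, sq_sqrt (hrw ▸ div_nonneg hLn hn0.le), hrw,
    mul_div_cancel₀ _ hn0.ne']

theorem StrictlyModerate.tendsto_sub_atTop (ha : StrictlyModerate a) {K : ℝ}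
    (hL : ∀ᶠ n in atTop, L n ≤ K * log n) :
    Tendsto (fun n : ℕ => n * a n ^ 2 - L n) atTop atTop := by
  have hlog : Tendsto (fun n : ℕ => log n) atTop atTop :=
    tendsto_log_atTop.comp tendsto_natCast_atTop_atTop
  refine tendsto_atTop_mono' atTop ?_ hlog
  filter_upwards [hL, ha.2.eventually_ge_atTop (K + 1), hlog.eventually_gt_atTop 0]
    with n hLn hn hlog_pos
  have := (le_div_iff₀ hlog_pos).mp hn
  linarith

theorem Moderate.moderate_shiftedSeq (ha : Moderate a) {c : ℝ} (hL : ∀ᶠ n in atTop, c ≤ L n)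
    (hsub : Tendsto (fun n : ℕ => n * a n ^ 2 - L n) atTop atTop) :
    Moderate (shiftedSeq a L) := by
  refine ⟨fun n => sqrt_nonneg _, tendsto_shiftedSeq_zero ha hL, hsub.congr' ?_⟩
  filter_upwards [eventually_natCast_mul_shiftedSeq_sq (hsub.eventually_ge_atTop 0)] with n hn
  exact hn.symm

end shiftedSeq

theorem stmt_1 (a : ℕ → ℝ) (ha : StrictlyModerate a) (p : Polynomial ℝ)
    (hp : ∀ n : ℕ, 0 < p.eval (n : ℝ)) :
    ∃ b : ℕ → ℝ, Moderate b ∧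
      (∀ᶠ n : ℕ in atTop,
        p.eval (n : ℝ) * Real.exp (-((n : ℝ) * (a n) ^ 2)) =
          Real.exp (-((n : ℝ) * (b n) ^ 2))) ∧
      ∀ η > 0, ∃ N : ℕ, ∀ n ≥ N, b n ≤ a n + η * a n := by
  set L : ℕ → ℝ := fun n => log (p.eval n)
  obtain ⟨c, hL_ge⟩ := p.exists_eventually_le_log_eval
  replace hL_ge : ∀ᶠ n in atTop, c ≤ L n := tendsto_natCast_atTop_atTop.eventually hL_ge
  have hsub := ha.tendsto_sub_atTop (K := p.natDegree + 1)
    (tendsto_natCast_atTop_atTop.eventually p.eventually_log_eval_le)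
  refine ⟨shiftedSeq a L, ha.1.moderate_shiftedSeq hL_ge hsub, ?_, fun η hη => ?_⟩
  · filter_upwards [eventually_natCast_mul_shiftedSeq_sq (hsub.eventually_ge_atTop 0)] with n hn
    rw [hn, neg_sub, exp_sub, exp_log (hp n), div_eq_mul_inv, exp_neg]
  · obtain ⟨N, hN⟩ := eventually_atTop.mp (eventually_shiftedSeq_le ha.1 hL_ge hη)
    exact ⟨N, fun n hn => (hN n hn).trans_eq (by ring)⟩
end

section
/- For density operators ρ, σ, τ on a finite-dimensional Hilbert space, if P(ρ,σ)² + P(σ,τ)² ≤ 1, then P(ρ,τ) ≤ P(ρ,σ)·F(σ,τ) + P(σ,τ)·F(ρ,σ), where F is the fidelity and P(x,y) = sqrt(1 - F(x,y)²) is the purified distance. -/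
open Matrix Filter
open scoped ComplexOrder Classical Kronecker

variable {n : Type*} [Fintype n] [DecidableEq n]

/-- Square root of a positive semidefinite matrix (0 if not PSD). -/
noncomputable def msqrt (A : Matrix n n ℂ) : Matrix n n ℂ :=
  if h : A.PosSemidef then
    (h.1.eigenvectorUnitary : Matrix n n ℂ) * diagonal ((↑) ∘ (√·) ∘ h.1.eigenvalues) *
      (star h.1.eigenvectorUnitary : Matrix n n ℂ)
  else 0

/-- Trace norm ‖A‖₁ = Tr √(AᴴA). -/
noncomputable def traceNorm (A : Matrix n n ℂ) : ℝ :=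
  ((msqrt (Aᴴ * A)).trace).re

/-- Fidelity F(ρ,σ) = ‖√ρ √σ‖₁. -/
noncomputable def fidelity (ρ σ : Matrix n n ℂ) : ℝ :=
  traceNorm (msqrt ρ * msqrt σ)

/-- Purified distance for normalized states. -/
noncomputable def purifiedDist (ρ σ : Matrix n n ℂ) : ℝ :=
  Real.sqrt (1 - (fidelity ρ σ) ^ 2)

/-- Density operator predicate. -/
def IsDensity (ρ : Matrix n n ℂ) : Prop := ρ.PosSemidef ∧ ρ.trace = 1

/-- Subnormalized state predicate. -/
def IsSubnormalized (ρ : Matrix n n ℂ) : Prop := ρ.PosSemidef ∧ ρ.trace.re ≤ 1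

/-- Generalized fidelity for subnormalized states. -/
noncomputable def genFidelity (ρ σ : Matrix n n ℂ) : ℝ :=
  traceNorm (msqrt ρ * msqrt σ) + Real.sqrt ((1 - ρ.trace.re) * (1 - σ.trace.re))

/-- Purified distance via the generalized fidelity. -/
noncomputable def purifiedDistG (ρ σ : Matrix n n ℂ) : ℝ :=
  Real.sqrt (1 - (genFidelity ρ σ) ^ 2)

/-- Max-relative entropy (base 2). -/
noncomputable def Dmax (ρ σ : Matrix n n ℂ) : ℝ :=
  sInf {l : ℝ | ((2:ℝ) ^ l • σ - ρ).PosSemidef}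

/-- Min-relative entropy (base 2). -/
noncomputable def Dmin (ρ σ : Matrix n n ℂ) : ℝ :=
  -Real.logb 2 ((fidelity ρ σ) ^ 2)

/-- ε-ball of subnormalized states around ρ in purified distance. -/
def epsBall (ε : ℝ) (ρ : Matrix n n ℂ) : Set (Matrix n n ℂ) :=
  {ρ' | IsSubnormalized ρ' ∧ purifiedDistG ρ ρ' ≤ ε}

/-- Matrix logarithm via the hermitian functional calculus (0 if not Hermitian). -/
noncomputable def mlog (A : Matrix n n ℂ) : Matrix n n ℂ :=
  if h : A.IsHermitian then h.cfc Real.log else 0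

/-- Quantum relative entropy D(ρ‖σ) = Tr ρ(log ρ − log σ). -/
noncomputable def relEnt (ρ σ : Matrix n n ℂ) : ℝ :=
  ((ρ * (mlog ρ - mlog σ)).trace).re

/-- Relative entropy variance V(ρ‖σ). -/
noncomputable def relVar (ρ σ : Matrix n n ℂ) : ℝ :=
  ((ρ * (mlog ρ - mlog σ) ^ 2).trace).re - (relEnt ρ σ) ^ 2

/-- Varentropy V(A)_ρ = Tr(ρ (log ρ)²) − (Tr ρ log ρ)². -/
noncomputable def varentropy (ρ : Matrix n n ℂ) : ℝ :=
  ((ρ * (mlog ρ) ^ 2).trace).re - (((ρ * mlog ρ).trace).re) ^ 2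

/-- Partial trace over the second (B) register. -/
noncomputable def ptraceB {A B : Type*} [Fintype A] [Fintype B]
    (M : Matrix (A × B) (A × B) ℂ) : Matrix A A ℂ :=
  Matrix.of fun a a' => ∑ b, M (a, b) (a', b)

/-- Partial trace over the first (A) register. -/
noncomputable def ptraceA {A B : Type*} [Fintype A] [Fintype B]
    (M : Matrix (A × B) (A × B) ℂ) : Matrix B B ℂ :=
  Matrix.of fun b b' => ∑ a, M (a, b) (a, b')

/-! Choose unitaries `U`, `V` (from polar decompositions) such that the Hilbert–Schmidt unit vectors
`√ρ`, `√σ U`, `√τ V U` have inner products `F(ρ,σ)` and `F(σ,τ)` between consecutive ones, while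
`|tr (√ρ √τ W)| ≤ F(ρ,τ)` for every unitary `W`. The angles `arccos F` then obey the triangle
inequality, `F(ρ,τ) ≥ F(ρ,σ) F(σ,τ) - P(ρ,σ) P(σ,τ)`. The hypothesis says the two angles add up
to at most `π/2`, and taking sines gives the claim. -/

open scoped MatrixOrder InnerProductSpace

set_option linter.unusedSectionVars false

lemma msqrt_eq_sqrt {A : Matrix n n ℂ} (hA : A.PosSemidef) : msqrt A = CFC.sqrt A := by
  rw [msqrt, dif_pos hA, CFC.sqrt_eq_real_sqrt A hA.nonneg, cfcₙ_eq_cfc, hA.1.cfc_eq,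
    IsHermitian.cfc, Unitary.conjStarAlgAut_apply]
  rfl

lemma posSemidef_msqrt (A : Matrix n n ℂ) : (msqrt A).PosSemidef := by
  by_cases hA : A.PosSemidef
  · exact msqrt_eq_sqrt hA ▸ (CFC.sqrt_nonneg A).posSemidef
  · simpa [msqrt, hA] using PosSemidef.zero

lemma msqrt_mul_msqrt {A : Matrix n n ℂ} (hA : A.PosSemidef) : msqrt A * msqrt A = A := by
  rw [msqrt_eq_sqrt hA, CFC.sqrt_mul_sqrt_self A hA.nonneg]

noncomputable def hsVec (X : Matrix n n ℂ) : EuclideanSpace ℂ (n × n) :=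
  WithLp.toLp 2 X.vec

lemma inner_hsVec (X Y : Matrix n n ℂ) : ⟪hsVec X, hsVec Y⟫_ℂ = (Xᴴ * Y).trace := by
  rw [hsVec, hsVec, EuclideanSpace.inner_toLp_toLp, dotProduct_comm, star_vec_dotProduct_vec]

lemma inner_hsVec_mul_unitary (X Y : Matrix n n ℂ) {U : Matrix n n ℂ}
    (hU : U ∈ unitaryGroup n ℂ) : ⟪hsVec (X * U), hsVec (Y * U)⟫_ℂ = ⟪hsVec X, hsVec Y⟫_ℂ := by
  have hUU : U * Uᴴ = 1 := Unitary.mul_star_self_of_mem hU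
  rw [inner_hsVec, inner_hsVec, conjTranspose_mul, mul_assoc, ← mul_assoc Xᴴ, trace_mul_comm,
    mul_assoc, hUU, mul_one]

lemma norm_hsVec_mul_unitary (X : Matrix n n ℂ) {U : Matrix n n ℂ}
    (hU : U ∈ unitaryGroup n ℂ) : ‖hsVec (X * U)‖ = ‖hsVec X‖ := by
  rw [norm_eq_sqrt_re_inner (𝕜 := ℂ), norm_eq_sqrt_re_inner (𝕜 := ℂ),
    inner_hsVec_mul_unitary X X hU]

lemma norm_hsVec_sq (X : Matrix n n ℂ) : ‖hsVec X‖ ^ 2 = (Xᴴ * X).trace.re := by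
  rw [← inner_hsVec, ← inner_self_eq_norm_sq (𝕜 := ℂ)]
  rfl

-- The columns of `M` are orthogonal with squared norms `d`; normalise the nonzero ones and extend
-- them to an orthonormal basis, whose vectors are the columns of `W`.
lemma exists_unitary_mul_diagonal_sqrt_eq (M : Matrix n n ℂ) {d : n → ℝ} (hd : 0 ≤ d)
    (hM : Mᴴ * M = diagonal (Complex.ofReal ∘ d)) :
    ∃ W ∈ unitaryGroup n ℂ, W * diagonal (Complex.ofReal ∘ Real.sqrt ∘ d) = M := by
  let col : n → EuclideanSpace ℂ n := fun i => WithLp.toLp 2 (Mᵀ i)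
  have inner_col (i k : n) : ⟪col i, col k⟫_ℂ = diagonal (Complex.ofReal ∘ d) i k := by
    rw [← hM, EuclideanSpace.inner_toLp_toLp, dotProduct_comm]
    rfl
  let v : n → EuclideanSpace ℂ n := fun i => ((√(d i) : ℝ) : ℂ)⁻¹ • col i
  have hv : Orthonormal ℂ ({i | d i ≠ 0}.domRestrict v) := by
    rw [orthonormal_iff_ite]
    rintro ⟨i, hi⟩ ⟨k, hk⟩
    simp only [Set.domRestrict_apply, v, inner_smul_left, inner_smul_right, inner_col,
      Subtype.mk.injEq]
    by_cases hik : i = k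
    · subst hik
      have hsq : ((√(d i) : ℝ) : ℂ) * ((√(d i) : ℝ) : ℂ) = d i := by
        rw [← Complex.ofReal_mul, Real.mul_self_sqrt (hd i)]
      have hne : ((√(d i) : ℝ) : ℂ) ≠ 0 := by
        simpa [Real.sqrt_eq_zero (hd i)] using hi
      simp only [diagonal_apply_eq, Function.comp_apply, map_inv₀, Complex.conj_ofReal, if_true]
      rw [← hsq]
      field_simp
    · simp [hik]
  obtain ⟨b, hb⟩ := hv.exists_orthonormalBasis_extension_of_card_eq (by simp)
  refine ⟨(EuclideanSpace.basisFun n ℂ).toBasis.toMatrix b,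
    (EuclideanSpace.basisFun n ℂ).toMatrix_orthonormalBasis_mem_unitary b, ?_⟩
  ext j i
  rw [mul_diagonal]
  by_cases hi : d i = 0
  · have hcol : Mᵀ i = 0 := by
      rw [← WithLp.toLp_eq_zero 2, ← inner_self_eq_zero (𝕜 := ℂ), inner_col]
      simp [hi]
    rw [← transpose_apply M i j, hcol]
    simp [hi]
  · have hne : ((√(d i) : ℝ) : ℂ) ≠ 0 := by
      simpa [Real.sqrt_eq_zero (hd i)] using hi
    simp only [Module.Basis.toMatrix_apply, OrthonormalBasis.coe_toBasis_repr_apply,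
      EuclideanSpace.basisFun_repr, hb i hi, v, col, Function.comp_apply, PiLp.smul_apply,
      transpose_apply, smul_eq_mul]
    field_simp

lemma exists_unitary_eq_mul_msqrt (A : Matrix n n ℂ) :
    ∃ U ∈ unitaryGroup n ℂ, A = U * msqrt (Aᴴ * A) := by
  have hP := posSemidef_conjTranspose_mul_self A
  set V : Matrix n n ℂ := (hP.1.eigenvectorUnitary : Matrix n n ℂ)
  have hV : V ∈ unitaryGroup n ℂ := hP.1.eigenvectorUnitary.2
  have hAV : (A * V)ᴴ * (A * V) = diagonal (Complex.ofReal ∘ hP.1.eigenvalues) := by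
    have h := hP.1.conjStarAlgAut_star_eigenvectorUnitary
    rw [Unitary.conjStarAlgAut_star_apply] at h
    rw [conjTranspose_mul, ← mul_assoc, mul_assoc Vᴴ]
    exact h
  obtain ⟨W, hW, hWAV⟩ := exists_unitary_mul_diagonal_sqrt_eq (A * V)
    (fun i => hP.eigenvalues_nonneg i) hAV
  refine ⟨W * star V, mul_mem hW (Unitary.star_mem hV), ?_⟩
  rw [msqrt, dif_pos hP]
  change A = W * star V * (V * _ * star V)
  calc A = A * V * star V := by rw [mul_assoc, Unitary.mul_star_self_of_mem hV, mul_one]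
    _ = _ := by
      rw [← hWAV]
      simp only [mul_assoc, ← mul_assoc (star V) V, Unitary.star_mul_self_of_mem hV, one_mul]

lemma traceNorm_nonneg (A : Matrix n n ℂ) : 0 ≤ traceNorm A :=
  RCLike.nonneg_iff.mp (posSemidef_msqrt _).trace_nonneg |>.1

lemma norm_trace_mul_unitary_le {S : Matrix n n ℂ} (hS : S.PosSemidef) {Y : Matrix n n ℂ}
    (hY : Y ∈ unitaryGroup n ℂ) : ‖(S * Y).trace‖ ≤ S.trace.re := by
  set R := msqrt S
  have hR : Rᴴ = R := (posSemidef_msqrt S).1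
  calc ‖(S * Y).trace‖ = ‖⟪hsVec R, hsVec (R * Y)⟫_ℂ‖ := by
        rw [inner_hsVec, hR, ← mul_assoc, msqrt_mul_msqrt hS]
    _ ≤ ‖hsVec R‖ * ‖hsVec (R * Y)‖ := norm_inner_le_norm _ _
    _ = S.trace.re := by
        rw [norm_hsVec_mul_unitary R hY, ← sq, norm_hsVec_sq, hR, msqrt_mul_msqrt hS]

lemma norm_trace_mul_unitary_le_traceNorm (A : Matrix n n ℂ) {X : Matrix n n ℂ}
    (hX : X ∈ unitaryGroup n ℂ) : ‖(A * X).trace‖ ≤ traceNorm A := by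
  obtain ⟨U, hU, hA⟩ := exists_unitary_eq_mul_msqrt A
  have hAX : (A * X).trace = (msqrt (Aᴴ * A) * (X * U)).trace := by
    conv_lhs => rw [hA, mul_assoc, trace_mul_comm, mul_assoc]
  rw [hAX, traceNorm]
  exact norm_trace_mul_unitary_le (posSemidef_msqrt _) (mul_mem hX hU)

lemma exists_unitary_trace_mul_eq_traceNorm (A : Matrix n n ℂ) :
    ∃ X ∈ unitaryGroup n ℂ, (A * X).trace = traceNorm A := by
  obtain ⟨U, hU, hA⟩ := exists_unitary_eq_mul_msqrt A
  refine ⟨star U, Unitary.star_mem hU, ?_⟩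
  conv_lhs => rw [hA, trace_mul_cycle, Unitary.star_mul_self_of_mem hU, one_mul]
  exact Complex.eq_re_of_ofReal_le (posSemidef_msqrt _).trace_nonneg

lemma norm_sub_smul_sq_of_inner_eq {𝕜 E : Type*} [RCLike 𝕜] [NormedAddCommGroup E]
    [InnerProductSpace 𝕜 E] {u v : E} (hv : ‖v‖ = 1) {a : ℝ} (ha : ⟪v, u⟫_𝕜 = a) :
    ‖u - (a : 𝕜) • v‖ ^ 2 = ‖u‖ ^ 2 - a ^ 2 := by
  rw [@norm_sub_sq 𝕜, norm_smul, hv, inner_smul_right, ← inner_conj_symm, ha]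
  simp only [RCLike.conj_ofReal, RCLike.mul_re, RCLike.ofReal_re, RCLike.ofReal_im, mul_zero,
    sub_zero, norm_algebraMap', Real.norm_eq_abs, mul_one, sq_abs]
  ring

-- With `a = cos α`, `b = cos β`: the angle between `u` and `w` is at most `α + β`.
lemma mul_sub_sqrt_mul_sqrt_le_re_inner {𝕜 E : Type*} [RCLike 𝕜] [NormedAddCommGroup E]
    [InnerProductSpace 𝕜 E] {u v w : E} (hu : ‖u‖ = 1) (hv : ‖v‖ = 1) (hw : ‖w‖ = 1) {a b : ℝ}
    (ha : ⟪u, v⟫_𝕜 = a) (hb : ⟪v, w⟫_𝕜 = b) :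
    a * b - √(1 - a ^ 2) * √(1 - b ^ 2) ≤ RCLike.re ⟪u, w⟫_𝕜 := by
  have ha' : ⟪v, u⟫_𝕜 = a := by rw [← inner_conj_symm, ha, RCLike.conj_ofReal]
  have hu' : ‖u - (a : 𝕜) • v‖ = √(1 - a ^ 2) := by
    rw [← Real.sqrt_sq (norm_nonneg _), norm_sub_smul_sq_of_inner_eq hv ha', hu, one_pow]
  have hw' : ‖w - (b : 𝕜) • v‖ = √(1 - b ^ 2) := by
    rw [← Real.sqrt_sq (norm_nonneg _), norm_sub_smul_sq_of_inner_eq hv hb, hw, one_pow]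
  have hinner : ⟪u - (a : 𝕜) • v, w - (b : 𝕜) • v⟫_𝕜 = ⟪u, w⟫_𝕜 - a * b := by
    simp only [inner_sub_left, inner_sub_right, inner_smul_left, inner_smul_right, ha, hb,
      inner_self_eq_norm_sq_to_K, hv, RCLike.conj_ofReal, RCLike.ofReal_one, one_pow]
    ring
  have hcs := norm_inner_le_norm (𝕜 := 𝕜) (u - (a : 𝕜) • v) (w - (b : 𝕜) • v)
  rw [hinner, hu', hw'] at hcs
  have hre := neg_le_of_abs_le ((RCLike.abs_re_le_norm _).trans hcs)
  rw [map_sub, ← RCLike.ofReal_mul, RCLike.ofReal_re] at hre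
  linarith

-- With `a = cos α`, `b = cos β`, `f = cos γ` and `α + β ≤ π / 2`: `γ ≤ α + β` gives
-- `sin γ ≤ sin (α + β)`.
lemma sqrt_one_sub_sq_le_of_mul_sub_le {a b f : ℝ} (ha₀ : 0 ≤ a) (ha₁ : a ≤ 1) (hb₀ : 0 ≤ b)
    (hb₁ : b ≤ 1) (hab : 1 ≤ a ^ 2 + b ^ 2) (hf : a * b - √(1 - a ^ 2) * √(1 - b ^ 2) ≤ f) :
    √(1 - f ^ 2) ≤ √(1 - a ^ 2) * b + √(1 - b ^ 2) * a := by
  set p := √(1 - a ^ 2)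
  set q := √(1 - b ^ 2)
  have hp : p ^ 2 = 1 - a ^ 2 := Real.sq_sqrt (by nlinarith)
  have hq : q ^ 2 = 1 - b ^ 2 := Real.sq_sqrt (by nlinarith)
  have hpb : p ≤ b := Real.sqrt_le_iff.mpr ⟨hb₀, by linarith⟩
  have hqa : q ≤ a := Real.sqrt_le_iff.mpr ⟨ha₀, by linarith⟩
  have hcos : 0 ≤ a * b - p * q := by
    nlinarith [mul_le_mul hqa hpb (Real.sqrt_nonneg _) ha₀]
  have hsin : (p * b + q * a) ^ 2 = 1 - (a * b - p * q) ^ 2 := by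
    linear_combination (b ^ 2 + q ^ 2) * hp + hq
  calc √(1 - f ^ 2) ≤ √((p * b + q * a) ^ 2) := by
        gcongr
        rw [hsin]
        nlinarith
    _ = p * b + q * a := Real.sqrt_sq (by positivity)

lemma inner_hsVec_msqrt_mul (ρ σ V : Matrix n n ℂ) :
    ⟪hsVec (msqrt ρ), hsVec (msqrt σ * V)⟫_ℂ = (msqrt ρ * msqrt σ * V).trace := by
  rw [inner_hsVec, (posSemidef_msqrt ρ).1, mul_assoc]

lemma norm_inner_hsVec_msqrt_mul_le_fidelity (ρ σ : Matrix n n ℂ) {V : Matrix n n ℂ}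
    (hV : V ∈ unitaryGroup n ℂ) : ‖⟪hsVec (msqrt ρ), hsVec (msqrt σ * V)⟫_ℂ‖ ≤ fidelity ρ σ := by
  rw [inner_hsVec_msqrt_mul]
  exact norm_trace_mul_unitary_le_traceNorm _ hV

lemma exists_unitary_inner_hsVec_msqrt_mul_eq_fidelity (ρ σ : Matrix n n ℂ) :
    ∃ V ∈ unitaryGroup n ℂ, ⟪hsVec (msqrt ρ), hsVec (msqrt σ * V)⟫_ℂ = fidelity ρ σ := by
  simp only [inner_hsVec_msqrt_mul]
  exact exists_unitary_trace_mul_eq_traceNorm _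

lemma norm_hsVec_msqrt {ρ : Matrix n n ℂ} (hρ : IsDensity ρ) : ‖hsVec (msqrt ρ)‖ = 1 := by
  rw [← pow_eq_one_iff_of_nonneg (norm_nonneg _) two_ne_zero, norm_hsVec_sq,
    (posSemidef_msqrt ρ).1, msqrt_mul_msqrt hρ.1, hρ.2, Complex.one_re]

lemma fidelity_nonneg (ρ σ : Matrix n n ℂ) : 0 ≤ fidelity ρ σ :=
  traceNorm_nonneg _

lemma fidelity_le_one {ρ σ : Matrix n n ℂ} (hρ : IsDensity ρ) (hσ : IsDensity σ) :
    fidelity ρ σ ≤ 1 := by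
  obtain ⟨V, hV, hF⟩ := exists_unitary_inner_hsVec_msqrt_mul_eq_fidelity ρ σ
  have := norm_inner_le_norm (𝕜 := ℂ) (hsVec (msqrt ρ)) (hsVec (msqrt σ * V))
  rwa [hF, norm_hsVec_msqrt hρ, norm_hsVec_mul_unitary _ hV, norm_hsVec_msqrt hσ, mul_one,
    Complex.norm_real, Real.norm_of_nonneg (fidelity_nonneg ρ σ)] at this

lemma fidelity_mul_sub_purifiedDist_mul_le {ρ σ τ : Matrix n n ℂ} (hρ : IsDensity ρ)
    (hσ : IsDensity σ) (hτ : IsDensity τ) :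
    fidelity ρ σ * fidelity σ τ - purifiedDist ρ σ * purifiedDist σ τ ≤ fidelity ρ τ := by
  obtain ⟨U, hU, hρσ⟩ := exists_unitary_inner_hsVec_msqrt_mul_eq_fidelity ρ σ
  obtain ⟨V, hV, hστ⟩ := exists_unitary_inner_hsVec_msqrt_mul_eq_fidelity σ τ
  have hU_στ : ⟪hsVec (msqrt σ * U), hsVec (msqrt τ * V * U)⟫_ℂ = fidelity σ τ := by
    rw [inner_hsVec_mul_unitary _ _ hU, hστ]
  calc _ ≤ RCLike.re ⟪hsVec (msqrt ρ), hsVec (msqrt τ * V * U)⟫_ℂ :=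
        mul_sub_sqrt_mul_sqrt_le_re_inner (norm_hsVec_msqrt hρ)
          (by rw [norm_hsVec_mul_unitary _ hU, norm_hsVec_msqrt hσ])
          (by rw [norm_hsVec_mul_unitary _ hU, norm_hsVec_mul_unitary _ hV, norm_hsVec_msqrt hτ])
          hρσ hU_στ
    _ ≤ fidelity ρ τ := by
        rw [mul_assoc]
        exact (RCLike.re_le_norm _).trans
          (norm_inner_hsVec_msqrt_mul_le_fidelity ρ τ (mul_mem hV hU))

theorem stmt_2 (ρ σ τ : Matrix n n ℂ)
    (hρ : IsDensity ρ) (hσ : IsDensity σ) (hτ : IsDensity τ)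
    (h : purifiedDist ρ σ ^ 2 + purifiedDist σ τ ^ 2 ≤ 1) :
    purifiedDist ρ τ ≤ purifiedDist ρ σ * fidelity σ τ + purifiedDist σ τ * fidelity ρ σ := by
  have hρσ₀ := fidelity_nonneg ρ σ
  have hρσ₁ := fidelity_le_one hρ hσ
  have hστ₀ := fidelity_nonneg σ τ
  have hστ₁ := fidelity_le_one hσ hτ
  have hsum : 1 ≤ fidelity ρ σ ^ 2 + fidelity σ τ ^ 2 := by
    rw [purifiedDist, purifiedDist, Real.sq_sqrt (by nlinarith), Real.sq_sqrt (by nlinarith)] at h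
    linarith
  exact sqrt_one_sub_sq_le_of_mul_sub_le hρσ₀ hρσ₁ hστ₀ hστ₁ hsum
    (fidelity_mul_sub_purifiedDist_mul_le hρ hσ hτ)
end

section
/- (Maximization with vanishing perturbation) Let D be a compact metric space, f, g : D → ℝ continuous functions, and {a_n} a sequence of positive reals with a_n → 0. Then max_{x∈D} (f(x) + a_n·g(x)) = f* + a_n·g* + o(a_n), where f* = max_{x∈D} f(x) and g* = sup{g(x) : f(x) = f*}. -/
open Filter

theorem stmt_13 {D : Type*} [MetricSpace D] [CompactSpace D] [Nonempty D]
    (f g : D → ℝ) (hf : Continuous f) (hg : Continuous g)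
    (a : ℕ → ℝ) (hapos : ∀ n, 0 < a n) (ha : Tendsto a atTop (nhds 0)) :
    ∃ h : ℕ → ℝ, Tendsto (fun n => h n / a n) atTop (nhds 0) ∧
      ∀ n, sSup (Set.range fun x => f x + a n * g x) =
        sSup (Set.range f) +
          a n * sSup (g '' {x | f x = sSup (Set.range f)}) + h n := by
  -- maximizer of f
  obtain ⟨x0, -, hx0'⟩ := isCompact_univ.exists_isMaxOn Set.univ_nonempty hf.continuousOn
  have hx0 : ∀ y, f y ≤ f x0 := fun y => hx0' (Set.mem_univ y)
  set F := sSup (Set.range f) with hFdef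
  have hFx0 : F = f x0 := by
    apply le_antisymm
    · exact csSup_le (Set.range_nonempty f) (by rintro _ ⟨y, rfl⟩; exact hx0 y)
    · exact le_csSup ⟨f x0, by rintro _ ⟨y, rfl⟩; exact hx0 y⟩ ⟨x0, rfl⟩
  set S := {x | f x = F} with hSdef
  have hx0S : x0 ∈ S := hFx0.symm
  have hScpt : IsCompact S := (isClosed_eq hf continuous_const).isCompact
  have hgS_bdd : BddAbove (g '' S) := (hScpt.image hg).bddAbove
  -- maximizer of g on S
  obtain ⟨x1, hx1S, hx1'⟩ := hScpt.exists_isMaxOn ⟨x0, hx0S⟩ hg.continuousOn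
  have hx1 : ∀ y ∈ S, g y ≤ g x1 := fun y hy => hx1' hy
  set G := sSup (g '' S) with hGdef
  have hGx1 : G = g x1 := by
    apply le_antisymm
    · exact csSup_le ⟨g x0, Set.mem_image_of_mem g hx0S⟩
        (by rintro _ ⟨y, hy, rfl⟩; exact hx1 y hy)
    · exact le_csSup hgS_bdd (Set.mem_image_of_mem g hx1S)
  -- maximizer of g on D
  obtain ⟨x2, -, hx2'⟩ := isCompact_univ.exists_isMaxOn Set.univ_nonempty hg.continuousOn
  have hx2 : ∀ y, g y ≤ g x2 := fun y => hx2' (Set.mem_univ y)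
  set M : ℕ → ℝ := fun n => sSup (Set.range fun x => f x + a n * g x) with hMdef
  have hbdd : ∀ n, BddAbove (Set.range fun x => f x + a n * g x) := by
    intro n
    refine ⟨f x0 + a n * g x2, ?_⟩
    rintro _ ⟨y, rfl⟩
    have := mul_le_mul_of_nonneg_left (hx2 y) (hapos n).le
    have := hx0 y
    dsimp only
    linarith
  have hM_lb : ∀ n, F + a n * G ≤ M n := by
    intro n
    have : F + a n * G = f x1 + a n * g x1 := by rw [hGx1, hx1S]
    rw [this]
    exact le_csSup (hbdd n) ⟨x1, rfl⟩
  refine ⟨fun n => M n - F - a n * G, ?_, fun n => by ring⟩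
  have hnn : ∀ n, 0 ≤ (M n - F - a n * G) / a n := fun n =>
    div_nonneg (by linarith [hM_lb n]) (hapos n).le
  rw [NormedAddCommGroup.tendsto_nhds_zero]
  intro ε hε
  -- find δ > 0 such that on {x | G + ε/2 ≤ g x} we have f x ≤ F - δ
  obtain ⟨δ, hδ, hKey⟩ : ∃ δ > 0, ∀ x, G + ε / 2 ≤ g x → f x ≤ F - δ := by
    set K := {x | G + ε / 2 ≤ g x} with hKdef
    rcases Set.eq_empty_or_nonempty K with hK | hK
    · exact ⟨1, one_pos, fun x hx => absurd (show x ∈ K from hx) (by rw [hK]; simp)⟩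
    · have hKcpt : IsCompact K := (isClosed_le continuous_const hg).isCompact
      obtain ⟨x3, hx3K, hx3'⟩ := hKcpt.exists_isMaxOn hK hf.continuousOn
      have hx3 : ∀ y ∈ K, f y ≤ f x3 := fun y hy => hx3' hy
      have hlt : f x3 < F := by
        rcases lt_or_eq_of_le (hx0 x3) with h | h
        · rwa [hFx0]
        · exfalso
          have hx3S : x3 ∈ S := by rw [hSdef]; simp [h, hFx0]
          have : g x3 ≤ G := le_csSup hgS_bdd (Set.mem_image_of_mem g hx3S)
          have : G + ε / 2 ≤ g x3 := hx3K
          linarith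
      refine ⟨F - f x3, by linarith, fun x hx => ?_⟩
      have := hx3 x hx
      linarith
  -- eventually a n * (g x2 - (G + ε/2)) < δ
  have hev : ∀ᶠ n in atTop, a n * (g x2 - (G + ε / 2)) < δ := by
    have : Tendsto (fun n => a n * (g x2 - (G + ε / 2))) atTop (nhds 0) := by
      simpa using ha.mul_const (g x2 - (G + ε / 2))
    exact this.eventually_lt_const hδ
  filter_upwards [hev] with n hn
  have hMub : M n ≤ F + a n * (G + ε / 2) := by
    apply csSup_le (Set.range_nonempty _)
    rintro _ ⟨x, rfl⟩
    dsimp only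
    by_cases hx : G + ε / 2 ≤ g x
    · have h1 := hKey x hx
      have h2 := mul_le_mul_of_nonneg_left (hx2 x) (hapos n).le
      have h3 : a n * g x2 - a n * (G + ε / 2) = a n * (g x2 - (G + ε / 2)) := by ring
      linarith
    · push_neg at hx
      have h1 := hx0 x
      have h2 := mul_le_mul_of_nonneg_left hx.le (hapos n).le
      rw [← hFx0] at h1
      linarith
  have hle : (M n - F - a n * G) / a n ≤ ε / 2 := by
    rw [div_le_iff₀ (hapos n)]
    have : a n * (G + ε / 2) - a n * G = ε / 2 * a n := by ring
    linarith
  rw [Real.norm_eq_abs, abs_of_nonneg (hnn n)]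
  linarith
end
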